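/- Assume d is bounded. Then d_F and d_Fm are metrics on F' if and only if θ ≤ 2, and both coincide with the Hausdorff distance d_H induced by d on ordinary finite nonempty subsets of X, i.e. for finite nonempty subsets S,T of X, identified with the elements {1e_x : x∈S} and {1e_x : x∈T} of F', one has d_F(S,T) = d_Fm(S,T) = d_H(S,T). -/

import Mathlib

/-- `ρ` is a metric: zero iff equal, symmetric, triangle inequality. -/
def IsMetric {α : Type*} (ρ : α → α → ℝ) : Prop :=
  (∀ x y, ρ x y = 0 ↔ x = y) ∧ (∀ x y, ρ x y = ρ y x) ∧
    ∀ x y z, ρ x z ≤ ρ x y + ρ y z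

def IsCauchyWith {α : Type*} (ρ : α → α → ℝ) (S : ℕ → α) : Prop :=
  ∀ ε : ℝ, 0 < ε → ∃ N : ℕ, ∀ m ≥ N, ∀ n ≥ N, ρ (S m) (S n) < ε

def TendsToWith {α : Type*} (ρ : α → α → ℝ) (S : ℕ → α) (l : α) : Prop :=
  ∀ ε : ℝ, 0 < ε → ∃ N : ℕ, ∀ n ≥ N, ρ (S n) l < ε

def IsCompleteWith {α : Type*} (ρ : α → α → ℝ) : Prop :=
  ∀ S : ℕ → α, IsCauchyWith ρ S → ∃ l, TendsToWith ρ S l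

/-- the topology generated by the open balls of `ρ` -/
def topOf {α : Type*} (ρ : α → α → ℝ) : TopologicalSpace α :=
  TopologicalSpace.generateFrom {s | ∃ (x : α) (ε : ℝ), s = {y | ρ x y < ε}}

/-- `sup d`, the supremum of all distances in `X` -/
noncomputable def supD (X : Type*) [MetricSpace X] : ℝ :=
  sSup {r : ℝ | ∃ x y : X, dist x y = r}

/-- The multiset distance `d_E`: enumerate `a` and `c` with multiplicity in all possible
orders; the shorter enumeration is matched against an initial part of the other, taking
the sum of the distances of matched pairs plus the notional part `M * |C(c) - C(a)|`;
`d_E` is the least such value. -/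
noncomputable def dE {X : Type*} [MetricSpace X] (M : ℝ) (a c : Multiset X) : ℝ :=
  sInf {r : ℝ | ∃ la lc : List X, (la : Multiset X) = a ∧ (lc : Multiset X) = c ∧
    r = (List.zipWith dist la lc).sum + M * |(c.card : ℝ) - (a.card : ℝ)|}

/-- `d_Em`, the mean version of `d_E` (equal to `0` on the pair of empty multisets). -/
noncomputable def dEm {X : Type*} [MetricSpace X] (M : ℝ) (a c : Multiset X) : ℝ :=
  dE M a c / (max a.card c.card : ℕ)

/-- The setoid on `X × ℕ` identifying all points of the form `(x, 0)`. -/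
def ARel (X : Type*) : Setoid (X × ℕ) where
  r p q := p = q ∨ (p.2 = 0 ∧ q.2 = 0)
  iseqv := by
    refine ⟨fun p => Or.inl rfl, ?_, ?_⟩
    · rintro p q (rfl | h)
      · exact Or.inl rfl
      · exact Or.inr ⟨h.2, h.1⟩
    · rintro p q r (rfl | h) (rfl | h') <;> tauto

/-- The space `A`: the quotient of `X × ℕ` identifying all `(x, 0)` to one point. -/
abbrev SpaceA (X : Type*) : Type _ := Quotient (ARel X)

/-- The class `r eₓ` of `(x, r)` in `A`. -/
def aMk {X : Type*} (x : X) (r : ℕ) : SpaceA X := Quotient.mk (ARel X) (x, r)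

/-- The distinguished point `e₀` of `A`. -/
noncomputable def e0A (X : Type*) [Nonempty X] : SpaceA X :=
  aMk (Classical.arbitrary X) 0

/-- The multiplicity of a point of `A`. -/
def cardA {X : Type*} : SpaceA X → ℕ :=
  Quotient.lift (fun p => p.2) (by rintro p q (rfl | ⟨h1, h2⟩) <;> simp_all)

/-- The distance `d_A(r eₓ, t e_z) = M|t - r| + min r t * d(x,z)` on `A`. -/
noncomputable def dA {X : Type*} [MetricSpace X] (M : ℝ) : SpaceA X → SpaceA X → ℝ :=
  Quotient.lift₂
    (fun p q => M * |(q.2 : ℝ) - (p.2 : ℝ)| + (min p.2 q.2 : ℕ) * dist p.1 q.1)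
    (by rintro p q p' q' (rfl | ⟨h1, h2⟩) (rfl | ⟨h3, h4⟩) <;> simp_all)

/-- The mean distance `d_Am = d_A / max r t` on `A` (with value `0` at `(e₀, e₀)`). -/
noncomputable def dAm {X : Type*} [MetricSpace X] (M : ℝ) (u v : SpaceA X) : ℝ :=
  dA M u v / (max (cardA u) (cardA v) : ℕ)
/-- The Hausdorff distance between two sets with respect to a distance function
`δ`: for finite nonempty `S`, `T` this is
`max (max_{s ∈ S} min_{t ∈ T} δ s t) (max_{t ∈ T} min_{s ∈ S} δ s t)`. -/
noncomputable def hausSet {α : Type*} (δ : α → α → ℝ) (S T : Set α) : ℝ :=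
  max (sSup ((fun s => sInf ((fun t => δ s t) '' T)) '' S))
    (sSup ((fun t => sInf ((fun s => δ s t) '' S)) '' T))

/-- `F'`, the collection of nonempty finite subsets of `A`. -/
abbrev FP (X : Type*) : Type _ := {S : Finset (SpaceA X) // S.Nonempty}

/-- `d_F`, the Hausdorff distance on `F'` induced by `d_A`. -/
noncomputable def dF {X : Type*} [MetricSpace X] (M : ℝ) (S T : FP X) : ℝ :=
  hausSet (dA M) (S.1 : Set (SpaceA X)) (T.1 : Set (SpaceA X))

/-- `d_Fm`, the Hausdorff distance on `F'` induced by `d_Am`. -/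
noncomputable def dFm {X : Type*} [MetricSpace X] (M : ℝ) (S T : FP X) : ℝ :=
  hausSet (dAm M) (S.1 : Set (SpaceA X)) (T.1 : Set (SpaceA X))

open Classical in
/-- The identification of a finite nonempty subset `S` of `X` with the element
`{1eₓ : x ∈ S}` of `F'`. -/
noncomputable def embF {X : Type*} (S : {S : Finset X // S.Nonempty}) : FP X :=
  ⟨S.1.image (fun x => aMk x 1), S.2.image _⟩

open Classical in
/-- The multiplicity contributed at `x : X` by a point of `A`. -/
noncomputable def wt {X : Type*} : SpaceA X → X → ℕ :=
  Quotient.lift (fun p x => if p.1 = x then p.2 else 0)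
    (by rintro p q (rfl | ⟨h1, h2⟩)
        · rfl
        · funext x; simp [h1, h2])

/-- `t_U : X → ℕ` for `U ∈ F'`: `t_U x = Σ_{r eₓ ∈ U} r`. -/
noncomputable def tU {X : Type*} (U : Finset (SpaceA X)) (x : X) : ℕ :=
  ∑ u ∈ U, wt u x

/-- The setoid on `F'` given by `U ~ V` iff `t_U = t_V`. -/
def GRel (X : Type*) : Setoid (FP X) where
  r U V := ∀ x : X, tU U.1 x = tU V.1 x
  iseqv := by
    refine ⟨fun U x => rfl, fun h x => (h x).symm, fun h h' x => (h x).trans (h' x)⟩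

/-- The space `G = F'/~`. -/
abbrev GSp (X : Type*) : Type _ := Quotient (GRel X)

/-- `t` descends to `G`. -/
noncomputable def tG {X : Type*} : GSp X → X → ℕ :=
  Quotient.lift (fun U => tU U.1) (by intro U V h; funext x; exact h x)

/-- The class `e₀ ∈ G` of `{e₀} ∈ F'`. -/
noncomputable def e0G (X : Type*) [Nonempty X] : GSp X :=
  Quotient.mk (GRel X) ⟨{e0A X}, Finset.singleton_nonempty _⟩

/-- `d_G`, the quotient pseudometric on `G` induced by `d_F`: the infimum of the
lengths `d_F(q₀,p₁) + d_F(q₁,p₂) + ⋯ + d_F(qₙ,pₙ₊₁)` of chains with `q₀ ∈ α`,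
`pₙ₊₁ ∈ β` and `pᵢ ~ qᵢ` for `1 ≤ i ≤ n`. -/
noncomputable def dG {X : Type*} [MetricSpace X] (M : ℝ) (α β : GSp X) : ℝ :=
  sInf {r : ℝ | ∃ (n : ℕ) (p q : ℕ → FP X),
    Quotient.mk (GRel X) (q 0) = α ∧ Quotient.mk (GRel X) (p (n + 1)) = β ∧
    (∀ i, 1 ≤ i → i ≤ n → (GRel X).r (p i) (q i)) ∧
    r = ∑ i ∈ Finset.range (n + 1), dF M (q i) (p (i + 1))}

/-! The Hausdorff distance induced by `δ` on finite nonempty sets is a metric exactly when `δ` is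
one, since singletons embed isometrically; so everything is about `d_A` and `d_Am`. At the points
`1eₓ, 0eₓ, 1e_y` the triangle inequality reads `d(x,y) ≤ 2M`. Conversely, for `d_A`: if the
middle multiplicity `b` is at least `min a c`, the weights `min` only grow along the detour; if it
is smaller, the detour pays `M` for each unit of descent and ascent, which covers `d ≤ 2M`. For
`d_Am`, with `λ = min/max` one has `d_Am = M + λ (d - M)` away from `(e₀, e₀)`, and the triangle
inequality follows from `λ_ab λ_bc ≤ λ_ac`. Both distances restrict to `d` on the points `1eₓ`. -/

theorem add_min_mul_le_of_le_two_mul {M a b c p q s : ℝ} (hM : 0 ≤ M) (ha : 0 ≤ a) (hb : 0 ≤ b)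
    (hc : 0 ≤ c) (hp : 0 ≤ p) (hq : 0 ≤ q) (hs : s ≤ p + q) (hsM : s ≤ 2 * M) :
    M * |c - a| + min a c * s ≤ (M * |b - a| + min a b * p) + (M * |c - b| + min b c * q) := by
  rcases le_or_gt (min a c) b with hmb | hbm
  · have hab : min a c ≤ min a b := le_min (min_le_left a c) hmb
    have hbc : min a c ≤ min b c := le_min hmb (min_le_right a c)
    have hm : 0 ≤ min a c := le_min ha hc
    nlinarith [mul_le_mul_of_nonneg_left (abs_sub_le c b a) hM, mul_le_mul_of_nonneg_left hs hm,
      mul_le_mul_of_nonneg_right hab hp, mul_le_mul_of_nonneg_right hbc hq, abs_sub_comm a b]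
  · have hba : b < a := hbm.trans_le (min_le_left a c)
    have hbc : b < c := hbm.trans_le (min_le_right a c)
    rw [min_eq_right hba.le, min_eq_left hbc.le, abs_of_neg (sub_neg.2 hba),
      abs_of_pos (sub_pos.2 hbc), ← max_sub_min_eq_abs]
    nlinarith [mul_le_mul_of_nonneg_left hsM (sub_pos.2 hbm).le, mul_le_mul_of_nonneg_left hs hb,
      min_add_max a c]

noncomputable def minMaxRatio (a b : ℝ) : ℝ := min a b / max a b

namespace minMaxRatio

theorem comm (a b : ℝ) : minMaxRatio a b = minMaxRatio b a := by
  rw [minMaxRatio, minMaxRatio, min_comm, max_comm]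

theorem nonneg {a b : ℝ} (ha : 0 ≤ a) (hb : 0 ≤ b) : 0 ≤ minMaxRatio a b :=
  div_nonneg (le_min ha hb) (ha.trans (le_max_left a b))

theorem le_one {a b : ℝ} (ha : 0 ≤ a) : minMaxRatio a b ≤ 1 :=
  div_le_one_of_le₀ min_le_max (ha.trans (le_max_left a b))

theorem le_div {a b : ℝ} (ha : 0 ≤ a) (hb : 0 < b) : minMaxRatio a b ≤ a / b := by
  rw [minMaxRatio, div_le_div_iff₀ (hb.trans_le (le_max_right a b)) hb]
  exact mul_le_mul (min_le_left a b) (le_max_right a b) hb.le ha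

theorem mul_le {a b c : ℝ} (ha : 0 ≤ a) (hb : 0 ≤ b) (hc : 0 ≤ c) :
    minMaxRatio a b * minMaxRatio b c ≤ minMaxRatio a c := by
  rcases hb.eq_or_lt with rfl | hb
  · simp only [minMaxRatio, min_eq_right ha, zero_div, zero_mul]; exact nonneg ha hc
  wlog hac : a ≤ c generalizing a c
  · rw [mul_comm, comm a, comm b, comm a]
    exact this hc ha (le_of_not_ge hac)
  rcases ha.eq_or_lt with rfl | ha
  · simp only [minMaxRatio, min_eq_left hb.le, zero_div, zero_mul]; exact nonneg le_rfl hc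
  calc minMaxRatio a b * minMaxRatio b c ≤ a / b * (b / c) :=
        mul_le_mul (le_div ha.le hb) (le_div hb.le (ha.trans_le hac)) (nonneg hb.le hc)
          (by positivity)
    _ = minMaxRatio a c := by
        rw [minMaxRatio, min_eq_left hac, max_eq_right hac]; field_simp

end minMaxRatio

theorem add_min_mul_div_max_eq {M a c s : ℝ} (h : 0 < max a c) :
    (M * |c - a| + min a c * s) / max a c = M + minMaxRatio a c * (s - M) := by
  rw [minMaxRatio, ← max_sub_min_eq_abs]
  field_simp
  ring

theorem add_mul_sub_le_add_of_mul_le {M l₁ l₂ l₃ p q s : ℝ} (hM : 0 ≤ M) (h₁ : 0 ≤ l₁)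
    (h₁' : l₁ ≤ 1) (h₂ : 0 ≤ l₂) (h₂' : l₂ ≤ 1) (h₃ : l₃ ≤ 1)
    (h₁₂ : l₁ * l₂ ≤ l₃) (h₁₃ : l₁ * l₃ ≤ l₂) (h₂₃ : l₂ * l₃ ≤ l₁)
    (hp : 0 ≤ p) (hq : 0 ≤ q) (hs0 : 0 ≤ s) (hs : s ≤ p + q) (hsM : s ≤ 2 * M) :
    M + l₃ * (s - M) ≤ (M + l₁ * (p - M)) + (M + l₂ * (q - M)) := by
  wlog h : l₂ ≤ l₁ generalizing l₁ l₂ p q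
  · linarith [this h₂ h₂' h₁ h₁' (by linarith) h₂₃ h₁₃ hq hp (by linarith) (not_le.1 h).le]
  have hpq : l₂ * s ≤ l₁ * p + l₂ * q := by
    nlinarith [mul_le_mul_of_nonneg_left hs h₂, mul_le_mul_of_nonneg_right h hp]
  -- what remains is affine in `s`, so it suffices to check it at `s = 0` or at `s = 2M`
  rcases le_total l₃ l₂ with h₃₂ | h₂₃'
  · nlinarith [mul_nonneg hM (mul_nonneg (sub_nonneg.2 h₁') (sub_nonneg.2 h₂')),
      mul_le_mul_of_nonneg_left h₁₂ hM, mul_nonneg hs0 (sub_nonneg.2 h₃₂)]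
  · nlinarith [mul_nonneg hM (mul_nonneg (sub_nonneg.2 h₁') (sub_nonneg.2 h₃)),
      mul_le_mul_of_nonneg_left h₁₃ hM, mul_le_mul_of_nonneg_left hsM (sub_nonneg.2 h₂₃')]

theorem add_min_mul_div_max_le_of_le_two_mul {M a b c p q s : ℝ} (hM : 0 ≤ M) (ha : 0 ≤ a)
    (hb : 0 ≤ b) (hc : 0 ≤ c) (hab : 0 < max a b) (hbc : 0 < max b c) (hac : 0 < max a c)
    (hp : 0 ≤ p) (hq : 0 ≤ q) (hs0 : 0 ≤ s) (hs : s ≤ p + q) (hsM : s ≤ 2 * M) :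
    (M * |c - a| + min a c * s) / max a c ≤
      (M * |b - a| + min a b * p) / max a b + (M * |c - b| + min b c * q) / max b c := by
  rw [add_min_mul_div_max_eq hac, add_min_mul_div_max_eq hab, add_min_mul_div_max_eq hbc]
  refine add_mul_sub_le_add_of_mul_le hM (minMaxRatio.nonneg ha hb) (minMaxRatio.le_one ha)
    (minMaxRatio.nonneg hb hc) (minMaxRatio.le_one hb) (minMaxRatio.le_one ha)
    (minMaxRatio.mul_le ha hb hc) ?_ ?_ hp hq hs0 hs hsM
  · simpa only [minMaxRatio.comm a b] using minMaxRatio.mul_le hb ha hc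
  · simpa only [minMaxRatio.comm c b, minMaxRatio.comm c a, mul_comm] using
      minMaxRatio.mul_le ha hc hb

section SpaceA

variable {X : Type*}

theorem aMk_surjective : Function.Surjective (fun p : X × ℕ => aMk p.1 p.2) :=
  fun u => Quotient.inductionOn u fun p => ⟨p, rfl⟩

theorem aMk_eq_aMk_iff {x z : X} {r t : ℕ} :
    aMk x r = aMk z t ↔ (x = z ∧ r = t) ∨ (r = 0 ∧ t = 0) := by
  rw [aMk, aMk, Quotient.eq]
  exact or_congr_left Prod.ext_iff

theorem cardA_aMk (x : X) (r : ℕ) : cardA (aMk x r) = r := rfl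

theorem eq_of_cardA_eq_zero {u v : SpaceA X} (hu : cardA u = 0) (hv : cardA v = 0) : u = v := by
  obtain ⟨⟨x, r⟩, rfl⟩ := aMk_surjective u
  obtain ⟨⟨z, t⟩, rfl⟩ := aMk_surjective v
  exact aMk_eq_aMk_iff.2 (Or.inr ⟨hu, hv⟩)

theorem max_cardA_pos {u v : SpaceA X} (h : u ≠ v) : 0 < max (cardA u) (cardA v) := by
  by_contra! h0
  exact h (eq_of_cardA_eq_zero (by omega) (by omega))

variable [MetricSpace X] {M : ℝ}

theorem dA_aMk (x z : X) (r t : ℕ) :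
    dA M (aMk x r) (aMk z t) = M * |(t : ℝ) - r| + min (r : ℝ) t * dist x z := by
  rw [← Nat.cast_min]; rfl

theorem dAm_aMk (x z : X) (r t : ℕ) :
    dAm M (aMk x r) (aMk z t) = (M * |(t : ℝ) - r| + min (r : ℝ) t * dist x z) / max (r : ℝ) t := by
  rw [dAm, dA_aMk, cardA_aMk, cardA_aMk, Nat.cast_max]

theorem dA_comm (u v : SpaceA X) : dA M u v = dA M v u := by
  obtain ⟨⟨x, r⟩, rfl⟩ := aMk_surjective u
  obtain ⟨⟨z, t⟩, rfl⟩ := aMk_surjective v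
  simp only [dA_aMk, abs_sub_comm, min_comm, dist_comm]

theorem dA_self (u : SpaceA X) : dA M u u = 0 := by
  obtain ⟨⟨x, r⟩, rfl⟩ := aMk_surjective u
  simp [dA_aMk]

theorem dA_nonneg (hM : 0 ≤ M) (u v : SpaceA X) : 0 ≤ dA M u v := by
  obtain ⟨⟨x, r⟩, rfl⟩ := aMk_surjective u
  obtain ⟨⟨z, t⟩, rfl⟩ := aMk_surjective v
  rw [dA_aMk]
  positivity

theorem dA_eq_zero_iff (hM : 0 < M) {u v : SpaceA X} : dA M u v = 0 ↔ u = v := by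
  refine ⟨fun h => ?_, fun h => h ▸ dA_self u⟩
  obtain ⟨⟨x, r⟩, rfl⟩ := aMk_surjective u
  obtain ⟨⟨z, t⟩, rfl⟩ := aMk_surjective v
  rw [dA_aMk, add_eq_zero_iff_of_nonneg (by positivity) (by positivity)] at h
  obtain ⟨hrt, hxz⟩ := h
  obtain rfl : r = t := by
    exact_mod_cast (sub_eq_zero.1 (abs_eq_zero.1 ((mul_eq_zero.1 hrt).resolve_left hM.ne'))).symm
  rw [min_self, mul_eq_zero, Nat.cast_eq_zero, dist_eq_zero] at hxz
  rcases hxz with rfl | rfl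
  · exact aMk_eq_aMk_iff.2 (Or.inr ⟨rfl, rfl⟩)
  · rfl

theorem dA_triangle (hM : 0 ≤ M) (hd : ∀ x y : X, dist x y ≤ 2 * M) (u v w : SpaceA X) :
    dA M u w ≤ dA M u v + dA M v w := by
  obtain ⟨⟨x, a⟩, rfl⟩ := aMk_surjective u
  obtain ⟨⟨y, b⟩, rfl⟩ := aMk_surjective v
  obtain ⟨⟨z, c⟩, rfl⟩ := aMk_surjective w
  simp only [dA_aMk]
  exact add_min_mul_le_of_le_two_mul hM a.cast_nonneg b.cast_nonneg c.cast_nonneg dist_nonneg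
    dist_nonneg (dist_triangle x y z) (hd x z)

theorem isMetric_dA_iff (hM : 0 < M) :
    IsMetric (dA M : SpaceA X → SpaceA X → ℝ) ↔ ∀ x y : X, dist x y ≤ 2 * M := by
  refine ⟨fun h x y => ?_, fun hd => ⟨fun u v => dA_eq_zero_iff hM, dA_comm,
    dA_triangle hM.le hd⟩⟩
  have := h.2.2 (aMk x 1) (aMk x 0) (aMk y 1)
  norm_num [dA_aMk] at this
  linarith

theorem dAm_comm (u v : SpaceA X) : dAm M u v = dAm M v u := by
  rw [dAm, dAm, dA_comm, max_comm]

theorem dAm_self (u : SpaceA X) : dAm M u u = 0 := by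
  rw [dAm, dA_self, zero_div]

theorem dAm_nonneg (hM : 0 ≤ M) (u v : SpaceA X) : 0 ≤ dAm M u v :=
  div_nonneg (dA_nonneg hM u v) (Nat.cast_nonneg _)

theorem dAm_eq_zero_iff (hM : 0 < M) {u v : SpaceA X} : dAm M u v = 0 ↔ u = v := by
  refine ⟨fun h => ?_, fun h => h ▸ dAm_self u⟩
  by_contra huv
  rcases div_eq_zero_iff.1 h with h | h
  · exact huv ((dA_eq_zero_iff hM).1 h)
  · exact (max_cardA_pos huv).ne' (by exact_mod_cast h)

theorem dAm_triangle (hM : 0 ≤ M) (hd : ∀ x y : X, dist x y ≤ 2 * M) (u v w : SpaceA X) :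
    dAm M u w ≤ dAm M u v + dAm M v w := by
  rcases eq_or_ne u v with rfl | huv
  · rw [dAm_self, zero_add]
  rcases eq_or_ne v w with rfl | hvw
  · rw [dAm_self, add_zero]
  rcases eq_or_ne u w with rfl | huw
  · rw [dAm_self]; exact add_nonneg (dAm_nonneg hM _ _) (dAm_nonneg hM _ _)
  have hpos : ∀ {u v : SpaceA X}, u ≠ v → (0 : ℝ) < max (cardA u : ℝ) (cardA v) := fun h => by
    exact_mod_cast max_cardA_pos h
  have hab := hpos huv
  have hbc := hpos hvw
  have hac := hpos huw
  obtain ⟨⟨x, a⟩, rfl⟩ := aMk_surjective u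
  obtain ⟨⟨y, b⟩, rfl⟩ := aMk_surjective v
  obtain ⟨⟨z, c⟩, rfl⟩ := aMk_surjective w
  simp only [cardA_aMk] at hab hbc hac
  simp only [dAm_aMk]
  exact add_min_mul_div_max_le_of_le_two_mul hM a.cast_nonneg b.cast_nonneg c.cast_nonneg hab hbc
    hac dist_nonneg dist_nonneg dist_nonneg (dist_triangle x y z) (hd x z)

theorem isMetric_dAm_iff (hM : 0 < M) :
    IsMetric (dAm M : SpaceA X → SpaceA X → ℝ) ↔ ∀ x y : X, dist x y ≤ 2 * M := by
  refine ⟨fun h x y => ?_, fun hd => ⟨fun u v => dAm_eq_zero_iff hM, dAm_comm,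
    dAm_triangle hM.le hd⟩⟩
  have := h.2.2 (aMk x 1) (aMk x 0) (aMk y 1)
  norm_num [dAm_aMk] at this
  linarith

theorem dA_aMk_one (x y : X) : dA M (aMk x 1) (aMk y 1) = dist x y := by
  simp [dA_aMk]

theorem dAm_aMk_one (x y : X) : dAm M (aMk x 1) (aMk y 1) = dist x y := by
  simp [dAm_aMk]

end SpaceA

theorem IsMetric.nonneg {α : Type*} {δ : α → α → ℝ} (h : IsMetric δ) (x y : α) : 0 ≤ δ x y := by
  have := h.2.2 x y x
  rw [(h.1 x x).2 rfl, h.2.1 y x] at this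
  linarith

section Hausdorff

variable {α : Type*} (δ : α → α → ℝ)

theorem hausSet_coe_finset {S T : Finset α} (hS : S.Nonempty) (hT : T.Nonempty) :
    hausSet δ S T =
      max (S.sup' hS fun s => T.inf' hT (δ s)) (T.sup' hT fun t => S.inf' hS (δ · t)) := by
  simp only [hausSet, Finset.sup'_eq_csSup_image, Finset.inf'_eq_csInf_image]

theorem hausSet_le_iff {S T : Finset α} (hS : S.Nonempty) (hT : T.Nonempty) {r : ℝ} :
    hausSet δ S T ≤ r ↔ (∀ s ∈ S, ∃ t ∈ T, δ s t ≤ r) ∧ ∀ t ∈ T, ∃ s ∈ S, δ s t ≤ r := by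
  simp only [hausSet_coe_finset δ hS hT, max_le_iff, Finset.sup'_le_iff, Finset.inf'_le_iff]

theorem hausSet_swap (S T : Set α) : hausSet δ S T = hausSet (fun x y => δ y x) T S :=
  max_comm _ _

theorem hausSet_singleton (a b : α) : hausSet δ {a} {b} = δ a b := by
  simp [hausSet]

theorem hausSet_image {β : Type*} (d : β → β → ℝ) (f : β → α) (hf : ∀ x y, δ (f x) (f y) = d x y)
    (S T : Set β) : hausSet δ (f '' S) (f '' T) = hausSet d S T := by
  simp only [hausSet, Set.image_image, hf]

theorem isMetric_hausSet {δ : α → α → ℝ} (h : IsMetric δ) :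
    IsMetric (fun S T : {S : Finset α // S.Nonempty} => hausSet δ (S.1 : Set α) T.1) := by
  have hcomm : ∀ S T : Set α, hausSet δ S T = hausSet δ T S := fun S T => by
    rw [hausSet_swap]; congr; funext x y; exact h.2.1 y x
  have hsub : ∀ S T : {S : Finset α // S.Nonempty}, hausSet δ (S.1 : Set α) T.1 ≤ 0 → S.1 ⊆ T.1 :=
    fun S T h0 s hs => by
      obtain ⟨t, ht, hst⟩ := ((hausSet_le_iff δ S.2 T.2).1 h0).1 s hs
      rwa [(h.1 s t).1 (hst.antisymm (h.nonneg s t))]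
  have hnonneg : ∀ S T : {S : Finset α // S.Nonempty}, 0 ≤ hausSet δ (S.1 : Set α) T.1 :=
    fun S T => by
      obtain ⟨s, hs⟩ := S.2
      obtain ⟨t, -, hst⟩ := ((hausSet_le_iff δ S.2 T.2).1 le_rfl).1 s hs
      exact (h.nonneg s t).trans hst
  refine ⟨fun S T => ⟨fun h0 => ?_, ?_⟩, fun S T => hcomm _ _, fun S T U => ?_⟩
  · exact Subtype.ext ((hsub S T h0.le).antisymm (hsub T S ((hcomm _ _).trans h0).le))
  · rintro rfl
    refine ((hausSet_le_iff δ S.2 S.2).2 ⟨fun s hs => ⟨s, hs, ?_⟩, fun s hs => ⟨s, hs, ?_⟩⟩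
      ).antisymm (hnonneg S S) <;> exact ((h.1 s s).2 rfl).le
  · obtain ⟨hST, hTS⟩ := (hausSet_le_iff δ S.2 T.2).1 le_rfl
    obtain ⟨hTU, hUT⟩ := (hausSet_le_iff δ T.2 U.2).1 le_rfl
    refine (hausSet_le_iff δ S.2 U.2).2 ⟨fun s hs => ?_, fun u hu => ?_⟩
    · obtain ⟨t, ht, hst⟩ := hST s hs
      obtain ⟨u, hu, htu⟩ := hTU t ht
      exact ⟨u, hu, (h.2.2 s t u).trans (add_le_add hst htu)⟩
    · obtain ⟨t, ht, htu⟩ := hUT u hu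
      obtain ⟨s, hs, hst⟩ := hTS t ht
      exact ⟨s, hs, (h.2.2 s t u).trans (add_le_add hst htu)⟩

theorem isMetric_hausSet_iff {δ : α → α → ℝ} :
    IsMetric (fun S T : {S : Finset α // S.Nonempty} => hausSet δ (S.1 : Set α) T.1) ↔
      IsMetric δ := by
  refine ⟨fun h => ?_, isMetric_hausSet⟩
  let single (a : α) : {S : Finset α // S.Nonempty} := ⟨{a}, Finset.singleton_nonempty a⟩
  have hsingle : ∀ a b, hausSet δ ((single a).1 : Set α) (single b).1 = δ a b := fun a b => by
    simp only [single, Finset.coe_singleton, hausSet_singleton]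
  refine ⟨fun a b => ?_, fun a b => ?_, fun a b c => ?_⟩
  · simpa only [hsingle, single, Subtype.mk.injEq, Finset.singleton_inj] using
      h.1 (single a) (single b)
  · simpa only [hsingle] using h.2.1 (single a) (single b)
  · simpa only [hsingle] using h.2.2 (single a) (single b) (single c)

end Hausdorff

theorem supD_le_iff {X : Type*} [MetricSpace X] (hbdd : ∃ B : ℝ, ∀ x y : X, dist x y ≤ B) {r : ℝ}
    (hr : 0 ≤ r) : supD X ≤ r ↔ ∀ x y : X, dist x y ≤ r := by
  obtain ⟨B, hB⟩ := hbdd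
  have hbdd' : BddAbove {r : ℝ | ∃ x y : X, dist x y = r} :=
    ⟨B, by rintro _ ⟨x, y, rfl⟩; exact hB x y⟩
  refine ⟨fun h x y => (le_csSup hbdd' ⟨x, y, rfl⟩).trans h, fun h => Real.sSup_le ?_ hr⟩
  rintro _ ⟨x, y, rfl⟩
  exact h x y

theorem stmt_15_general {X : Type*} [MetricSpace X] (M : ℝ) (hM : 0 < M)
    (hbdd : ∃ B : ℝ, ∀ x y : X, dist x y ≤ B) :
    ((IsMetric (dF (X := X) M) ↔ supD X / M ≤ 2) ∧
      (IsMetric (dFm (X := X) M) ↔ supD X / M ≤ 2)) ∧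
    (∀ S T : {S : Finset X // S.Nonempty},
      dF M (embF S) (embF T) = hausSet dist (S.1 : Set X) (T.1 : Set X) ∧
      dFm M (embF S) (embF T) = hausSet dist (S.1 : Set X) (T.1 : Set X)) := by
  have hθ : supD X / M ≤ 2 ↔ ∀ x y : X, dist x y ≤ 2 * M := by
    rw [div_le_iff₀ hM, mul_comm]
    exact supD_le_iff hbdd (by positivity)
  refine ⟨⟨?_, ?_⟩, fun S T => ⟨?_, ?_⟩⟩
  · rw [hθ, ← isMetric_dA_iff hM]
    exact isMetric_hausSet_iff
  · rw [hθ, ← isMetric_dAm_iff hM]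
    exact isMetric_hausSet_iff
  · simp only [dF, embF, Finset.coe_image]
    exact hausSet_image _ _ _ dA_aMk_one _ _
  · simp only [dFm, embF, Finset.coe_image]
    exact hausSet_image _ _ _ dAm_aMk_one _ _

/-- For bounded `d`: `d_F` and `d_Fm` are metrics on `F'` iff `(sup d)/M ≤ 2`, and
both coincide with the Hausdorff distance induced by `d` on ordinary finite nonempty
subsets of `X` (identified with elements of `F'` via `S ↦ {1eₓ : x ∈ S}`). -/
theorem stmt_15 {X : Type*} [MetricSpace X] [Nontrivial X] (M : ℝ) (hM : 0 < M)
    (hbdd : ∃ B : ℝ, ∀ x y : X, dist x y ≤ B) :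
    ((IsMetric (dF (X := X) M) ↔ supD X / M ≤ 2) ∧
      (IsMetric (dFm (X := X) M) ↔ supD X / M ≤ 2)) ∧
    (∀ S T : {S : Finset X // S.Nonempty},
      dF M (embF S) (embF T) = hausSet dist (S.1 : Set X) (T.1 : Set X) ∧
      dFm M (embF S) (embF T) = hausSet dist (S.1 : Set X) (T.1 : Set X)) :=
  stmt_15_general M hM hbdd
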